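/- Let K be a simple, non-degenerate, convex d-polytope admitting generalized barycentric coordinates. If x ∈ K and f₁,…,f_k are k ≥ 1 facets with h_{fᵢ}(x) < h⋆/(d+1) for each i, then the facets f₁,…,f_k share a common vertex. -/

import Mathlib

open scoped Classical

noncomputable section

/-- A combinatorial-geometric encoding of a simple convex `d`-dimensional polytope:
vertices `V`, and facets `F` given as pairs `(n, c)` of a unit outward normal and an offset,
so the facet hyperplane is `{x | ⟪n, x⟫ = c}` and `K` lies in `{x | ⟪n, x⟫ ≤ c}`.
Simplicity: each vertex lies on exactly `d` facets; non-degeneracy: distinct facets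
determine distinct hyperplanes (distinct `(n, c)` pairs in the `Finset`). -/
structure WPoly (d : ℕ) where
  V : Finset (EuclideanSpace ℝ (Fin d))
  F : Finset (EuclideanSpace ℝ (Fin d) × ℝ)
  V_nonempty : V.Nonempty
  F_nonempty : F.Nonempty
  norm_normal : ∀ f ∈ F, ‖f.1‖ = 1
  supporting : ∀ f ∈ F, ∀ v ∈ V, (inner ℝ f.1 v : ℝ) ≤ f.2
  facet_vertex : ∀ f ∈ F, ∃ v ∈ V, (inner ℝ f.1 v : ℝ) = f.2
  simple : ∀ v ∈ V, (F.filter fun f => (inner ℝ f.1 v : ℝ) = f.2).card = d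

namespace WPoly

variable {d : ℕ}

/-- The polytope as a set: the convex hull of its vertices. -/
def K (P : WPoly d) : Set (EuclideanSpace ℝ (Fin d)) :=
  convexHull ℝ (P.V : Set (EuclideanSpace ℝ (Fin d)))

/-- `hf f x`: the (signed) distance from `x` to the hyperplane of facet `f`;
it is nonnegative on `K`. -/
def hf (f : EuclideanSpace ℝ (Fin d) × ℝ) (x : EuclideanSpace ℝ (Fin d)) : ℝ :=
  f.2 - (inner ℝ f.1 x : ℝ)

/-- Vertices incident to facet `f`. -/
def Vf (P : WPoly d) (f : EuclideanSpace ℝ (Fin d) × ℝ) : Finset (EuclideanSpace ℝ (Fin d)) :=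
  P.V.filter fun v => (inner ℝ f.1 v : ℝ) = f.2

/-- Facets incident to vertex `v`. -/
def Fv (P : WPoly d) (v : EuclideanSpace ℝ (Fin d)) : Finset (EuclideanSpace ℝ (Fin d) × ℝ) :=
  P.F.filter fun f => (inner ℝ f.1 v : ℝ) = f.2

/-- Diameter of the polytope. -/
def hK (P : WPoly d) : ℝ := Metric.diam P.K

/-- Minimal distance between a vertex and a non-incident facet. -/
def hstar (P : WPoly d) : ℝ :=
  sInf {r : ℝ | ∃ f ∈ P.F, ∃ v ∈ P.V, v ∉ P.Vf f ∧ hf f v = r}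

/-- Generalized barycentric coordinates: nonnegative, partition of unity, linear precision. -/
def IsGBC (P : WPoly d) (φ : EuclideanSpace ℝ (Fin d) → EuclideanSpace ℝ (Fin d) → ℝ) : Prop :=
  (∀ v ∈ P.V, ∀ x ∈ P.K, 0 ≤ φ v x) ∧
  (∀ x ∈ P.K, ∑ v ∈ P.V, φ v x = 1) ∧
  (∀ x ∈ P.K, ∑ v ∈ P.V, φ v x • v = x)

/-- Wachspress weight function of vertex `v`: `w_v(x) = det(M_v) ∏_{f ∈ F ∖ F_v} h_f(x)`. -/
def wv (P : WPoly d) (detM : EuclideanSpace ℝ (Fin d) → ℝ)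
    (v x : EuclideanSpace ℝ (Fin d)) : ℝ :=
  detM v * ∏ f ∈ P.F \ P.Fv v, hf f x

/-- Total Wachspress weight `W = ∑ᵥ wᵥ`. -/
def W (P : WPoly d) (detM : EuclideanSpace ℝ (Fin d) → ℝ)
    (x : EuclideanSpace ℝ (Fin d)) : ℝ :=
  ∑ v ∈ P.V, P.wv detM v x

/-- `detM v` is the determinant of the matrix `M_v` whose columns are the unit outward
normals of the `d` facets at `v`, ordered so that the determinant is positive. -/
def IsDetM (P : WPoly d) (detM : EuclideanSpace ℝ (Fin d) → ℝ) : Prop :=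
  ∀ v ∈ P.V, 0 < detM v ∧ ∃ φ : Fin d → EuclideanSpace ℝ (Fin d) × ℝ,
    Function.Injective φ ∧ (∀ i, φ i ∈ P.Fv v) ∧
    detM v = Matrix.det (Matrix.of fun i j : Fin d => (φ j).1 i)

end WPoly

/-!
Linear precision gives `h_f(x) = ∑ᵥ φᵥ(x) h_f(v)`, and `h_f(v) ≥ h⋆` at every vertex off `f`, so
`h_f(x) < h⋆/(d+1)` forces the coordinates of the vertices off `f` to sum to less than `1/(d+1)`.
For at most `d + 1` such facets a union bound leaves positive coordinate mass on the vertices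
lying on all of them. Applied to `d + 1` of the facets this would put a vertex on `d + 1` facets,
against simplicity, so there are at most `d` of them and they share a vertex.
-/

theorem Finset.exists_mem_forall_mem_of_sum_sdiff_lt {ι α M : Type*} [DecidableEq α]
    [AddCommMonoid M] [PartialOrder M] [IsOrderedAddMonoid M]
    {s : Finset α} {I : Finset ι} {A : ι → Finset α} {w : α → M} (hw : ∀ a ∈ s, 0 ≤ w a)
    (h : ∑ i ∈ I, ∑ a ∈ s \ A i, w a < ∑ a ∈ s, w a) : ∃ a ∈ s, ∀ i ∈ I, a ∈ A i := by
  by_contra! hcover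
  refine h.not_ge ?_
  calc ∑ a ∈ s, w a ≤ ∑ a ∈ s, ∑ i ∈ I, if a ∈ A i then 0 else w a := by
        refine Finset.sum_le_sum fun a ha => ?_
        obtain ⟨i, hi, hai⟩ := hcover a ha
        calc w a = if a ∈ A i then 0 else w a := (if_neg hai).symm
          _ ≤ _ := Finset.single_le_sum (f := fun i => if a ∈ A i then 0 else w a)
              (fun j _ => by split_ifs <;> simp [hw a ha]) hi
    _ = ∑ i ∈ I, ∑ a ∈ s \ A i, w a := by
        rw [Finset.sum_comm]
        refine Finset.sum_congr rfl fun i _ => ?_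
        rw [Finset.sdiff_eq_filter, Finset.sum_filter]
        exact Finset.sum_congr rfl fun a _ => by split_ifs <;> rfl

namespace WPoly

variable {d : ℕ} (P : WPoly d)

theorem hf_nonneg {f : EuclideanSpace ℝ (Fin d) × ℝ} (hfF : f ∈ P.F)
    {y : EuclideanSpace ℝ (Fin d)} (hy : y ∈ P.K) : 0 ≤ hf f y := by
  have hV : (P.V : Set (EuclideanSpace ℝ (Fin d))) ⊆ {z | (inner ℝ f.1 z : ℝ) ≤ f.2} :=
    fun v hv => P.supporting f hfF v hv
  exact sub_nonneg.2 <| convexHull_min hV (convex_halfSpace_le (innerₛₗ ℝ f.1).isLinear f.2) hy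

theorem mem_Fv_iff_mem_Vf {f : EuclideanSpace ℝ (Fin d) × ℝ} (hfF : f ∈ P.F)
    {v : EuclideanSpace ℝ (Fin d)} (hv : v ∈ P.V) : f ∈ P.Fv v ↔ v ∈ P.Vf f := by
  simp [Fv, Vf, hfF, hv]

theorem card_le_of_forall_mem_Vf {G : Finset (EuclideanSpace ℝ (Fin d) × ℝ)} (hG : G ⊆ P.F)
    {v : EuclideanSpace ℝ (Fin d)} (hv : v ∈ P.V) (hvG : ∀ f ∈ G, v ∈ P.Vf f) : G.card ≤ d :=
  (Finset.card_le_card fun f hf => (P.mem_Fv_iff_mem_Vf (hG hf) hv).2 (hvG f hf)).trans_eq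
    (P.simple v hv)

theorem hstar_le_hf {f : EuclideanSpace ℝ (Fin d) × ℝ} (hfF : f ∈ P.F)
    {v : EuclideanSpace ℝ (Fin d)} (hv : v ∈ P.V) (hvf : v ∉ P.Vf f) : P.hstar ≤ hf f v := by
  refine csInf_le ?_ ⟨f, hfF, v, hv, hvf, rfl⟩
  refine ((P.F ×ˢ P.V).finite_toSet.image fun p => hf p.1 p.2).bddBelow.mono ?_
  rintro r ⟨f, hfF, v, hv, -, rfl⟩
  exact ⟨(f, v), by simp [hfF, hv], rfl⟩

variable {P} {φ : EuclideanSpace ℝ (Fin d) → EuclideanSpace ℝ (Fin d) → ℝ}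
  {x : EuclideanSpace ℝ (Fin d)}

theorem IsGBC.hf_eq_sum (hφ : P.IsGBC φ) (hx : x ∈ P.K) (f : EuclideanSpace ℝ (Fin d) × ℝ) :
    hf f x = ∑ v ∈ P.V, φ v x * hf f v := by
  have hinner : (inner ℝ f.1 x : ℝ) = ∑ v ∈ P.V, φ v x * inner ℝ f.1 v := by
    conv_lhs => rw [← hφ.2.2 x hx]
    simp only [inner_sum, real_inner_smul_right]
  rw [hf, hinner, ← one_mul f.2, ← hφ.2.1 x hx, Finset.sum_mul, ← Finset.sum_sub_distrib]
  simp only [hf, mul_sub]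

theorem IsGBC.hstar_mul_sum_le_hf (hφ : P.IsGBC φ) (hx : x ∈ P.K)
    {f : EuclideanSpace ℝ (Fin d) × ℝ} (hfF : f ∈ P.F) :
    P.hstar * ∑ v ∈ P.V \ P.Vf f, φ v x ≤ hf f x := by
  rw [hφ.hf_eq_sum hx, Finset.mul_sum]
  calc ∑ v ∈ P.V \ P.Vf f, P.hstar * φ v x ≤ ∑ v ∈ P.V \ P.Vf f, φ v x * hf f v := by
        refine Finset.sum_le_sum fun v hv => ?_
        rw [Finset.mem_sdiff] at hv
        rw [mul_comm]
        exact mul_le_mul_of_nonneg_left (P.hstar_le_hf hfF hv.1 hv.2) (hφ.1 v hv.1 x hx)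
    _ ≤ ∑ v ∈ P.V, φ v x * hf f v :=
        Finset.sum_le_sum_of_subset_of_nonneg Finset.sdiff_subset fun v hv _ =>
          mul_nonneg (hφ.1 v hv x hx) (P.hf_nonneg hfF (subset_convexHull ℝ _ hv))

theorem IsGBC.sum_lt_of_hf_lt (hφ : P.IsGBC φ) (hx : x ∈ P.K)
    {f : EuclideanSpace ℝ (Fin d) × ℝ} (hfF : f ∈ P.F) {ε : ℝ} (hε : 0 < ε)
    (hfx : hf f x < P.hstar * ε) : ∑ v ∈ P.V \ P.Vf f, φ v x < ε := by
  have hstar_pos : 0 < P.hstar :=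
    pos_of_mul_pos_left ((P.hf_nonneg hfF hx).trans_lt hfx) hε.le
  exact lt_of_mul_lt_mul_left ((hφ.hstar_mul_sum_le_hf hx hfF).trans_lt hfx) hstar_pos.le

theorem IsGBC.exists_common_vertex_of_card_le (hφ : P.IsGBC φ) (hx : x ∈ P.K)
    {G : Finset (EuclideanSpace ℝ (Fin d) × ℝ)} (hGF : G ⊆ P.F) (hGd : G.card ≤ d + 1)
    (hclose : ∀ f ∈ G, hf f x < P.hstar / (d + 1)) : ∃ v ∈ P.V, ∀ f ∈ G, v ∈ P.Vf f := by
  have hoff : ∀ f ∈ G, ∑ v ∈ P.V \ P.Vf f, φ v x < 1 / (d + 1) := fun f hfG =>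
    hφ.sum_lt_of_hf_lt hx (hGF hfG) (by positivity) ((div_eq_mul_one_div _ _).subst (hclose f hfG))
  refine Finset.exists_mem_forall_mem_of_sum_sdiff_lt (fun v hv => hφ.1 v hv x hx) ?_
  rw [hφ.2.1 x hx]
  rcases G.eq_empty_or_nonempty with rfl | hGne
  · simp
  calc ∑ f ∈ G, ∑ v ∈ P.V \ P.Vf f, φ v x < ∑ _f ∈ G, 1 / ((d : ℝ) + 1) :=
        Finset.sum_lt_sum_of_nonempty hGne hoff
    _ ≤ 1 := by
        rw [Finset.sum_const, nsmul_eq_mul, mul_one_div, div_le_one (by positivity)]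
        exact_mod_cast hGd

end WPoly

open WPoly in
theorem close_facets_common_vertex_general (d : ℕ) (P : WPoly d)
    (φ : EuclideanSpace ℝ (Fin d) → EuclideanSpace ℝ (Fin d) → ℝ) (hφ : P.IsGBC φ)
    (x : EuclideanSpace ℝ (Fin d)) (hx : x ∈ P.K)
    (G : Finset (EuclideanSpace ℝ (Fin d) × ℝ)) (hGF : G ⊆ P.F)
    (hclose : ∀ f ∈ G, hf f x < P.hstar / (d + 1)) :
    ∃ v ∈ P.V, ∀ f ∈ G, v ∈ P.Vf f := by
  obtain ⟨G', hG'G, hG'card⟩ := Finset.exists_subset_card_eq (min_le_left G.card (d + 1))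
  obtain ⟨v, hv, hvG'⟩ := hφ.exists_common_vertex_of_card_le hx (hG'G.trans hGF)
    (hG'card ▸ min_le_right _ _) fun f hfG' => hclose f (hG'G hfG')
  have hG'd : G'.card ≤ d := P.card_le_of_forall_mem_Vf (hG'G.trans hGF) hv hvG'
  obtain rfl : G' = G := Finset.eq_of_subset_of_card_le hG'G (by omega)
  exact ⟨v, hv, hvG'⟩

open WPoly in
/-- If `x ∈ K` and `f₁,…,f_k` (`k ≥ 1`) are facets of a simple, non-degenerate, convex
`d`-polytope with `h_{fᵢ}(x) < h⋆/(d+1)` for each `i`, then these facets share a common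
vertex. -/
theorem close_facets_common_vertex (d : ℕ) (P : WPoly d)
    (φ : EuclideanSpace ℝ (Fin d) → EuclideanSpace ℝ (Fin d) → ℝ) (hφ : P.IsGBC φ)
    (x : EuclideanSpace ℝ (Fin d)) (hx : x ∈ P.K)
    (G : Finset (EuclideanSpace ℝ (Fin d) × ℝ)) (hGF : G ⊆ P.F) (hGne : G.Nonempty)
    (hclose : ∀ f ∈ G, hf f x < P.hstar / (d + 1)) :
    ∃ v ∈ P.V, ∀ f ∈ G, v ∈ P.Vf f :=
  close_facets_common_vertex_general d P φ hφ x hx G hGF hclose
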